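/- arXiv:2002.08767 — 7 statements merged into one kernel-verified Lean document; each statement's English description precedes it below -/
import Mathlib

section
/- The complex function A = (a² − b²)/(a² + b²) + i·2ab/(a² + b²) satisfies the Poisson-bracket relation {A, H} = 2iλA at every point of U. -/
noncomputable section

open Complex

/-! Partial derivatives of complex-valued functions on phase space `(a, b, pa, pb)`. -/

def pda (f : ℝ → ℝ → ℝ → ℝ → ℂ) (a b pa pb : ℝ) : ℂ := deriv (fun t => f t b pa pb) a
def pdb (f : ℝ → ℝ → ℝ → ℝ → ℂ) (a b pa pb : ℝ) : ℂ := deriv (fun t => f a t pa pb) b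
def pdpa (f : ℝ → ℝ → ℝ → ℝ → ℂ) (a b pa pb : ℝ) : ℂ := deriv (fun t => f a b t pb) pa
def pdpb (f : ℝ → ℝ → ℝ → ℝ → ℂ) (a b pa pb : ℝ) : ℂ := deriv (fun t => f a b pa t) pb

/-- Poisson bracket of two complex-valued functions on phase space. -/
def PB (f g : ℝ → ℝ → ℝ → ℝ → ℂ) (a b pa pb : ℝ) : ℂ :=
  pda f a b pa pb * pdpa g a b pa pb + pdb f a b pa pb * pdpb g a b pa pb
    - pdpa f a b pa pb * pda g a b pa pb - pdpb f a b pa pb * pdb g a b pa pb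

/-! Partial derivatives of real-valued functions on phase space. -/

def pdaR (f : ℝ → ℝ → ℝ → ℝ → ℝ) (a b pa pb : ℝ) : ℝ := deriv (fun t => f t b pa pb) a
def pdbR (f : ℝ → ℝ → ℝ → ℝ → ℝ) (a b pa pb : ℝ) : ℝ := deriv (fun t => f a t pa pb) b
def pdpaR (f : ℝ → ℝ → ℝ → ℝ → ℝ) (a b pa pb : ℝ) : ℝ := deriv (fun t => f a b t pb) pa
def pdpbR (f : ℝ → ℝ → ℝ → ℝ → ℝ) (a b pa pb : ℝ) : ℝ := deriv (fun t => f a b pa t) pb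

/-- Poisson bracket of two real-valued functions on phase space. -/
def PBR (f g : ℝ → ℝ → ℝ → ℝ → ℝ) (a b pa pb : ℝ) : ℝ :=
  pdaR f a b pa pb * pdpaR g a b pa pb + pdbR f a b pa pb * pdpbR g a b pa pb
    - pdpaR f a b pa pb * pdaR g a b pa pb - pdpbR f a b pa pb * pdbR g a b pa pb

/-- The angular momentum `J = a p_b - b p_a`. -/
def Jang (a b pa pb : ℝ) : ℝ := a * pb - b * pa

/-- The Kepler-related Hamiltonian `H_{K2}` (real-valued). -/
def HR (k1 k2 k3 : ℝ) (a b pa pb : ℝ) : ℝ :=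
  (pa ^ 2 + pb ^ 2) / (2 * (a ^ 2 + b ^ 2)) + (k1 + k2 * a + k3 * b) / (a ^ 2 + b ^ 2)

/-- The Kepler-related Hamiltonian, viewed as a complex-valued function. -/
def HC (k1 k2 k3 : ℝ) (a b pa pb : ℝ) : ℂ := (HR k1 k2 k3 a b pa pb : ℂ)

/-- The function `lambda = J/(a^2+b^2)^2`. -/
def lam (a b pa pb : ℝ) : ℝ := Jang a b pa pb / (a ^ 2 + b ^ 2) ^ 2

def A1 (a b pa pb : ℝ) : ℝ := (a ^ 2 - b ^ 2) / (a ^ 2 + b ^ 2)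
def A2 (a b pa pb : ℝ) : ℝ := 2 * a * b / (a ^ 2 + b ^ 2)

/-- The complex function `A = A1 + i A2`. -/
def Afun (a b pa pb : ℝ) : ℂ := (A1 a b pa pb : ℂ) + Complex.I * (A2 a b pa pb : ℂ)

def B1 (k1 : ℝ) (a b pa pb : ℝ) : ℝ := (Jang a b pa pb) ^ 2 / (a ^ 2 + b ^ 2) + k1
def B2 (k2 k3 : ℝ) (a b pa pb : ℝ) : ℝ :=
  Jang a b pa pb * (a * pa + b * pb) / (a ^ 2 + b ^ 2) + k3 * a - k2 * b

/-- The complex function `B = B1 + i B2`. -/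
def Bfun (k1 k2 k3 : ℝ) (a b pa pb : ℝ) : ℂ :=
  (B1 k1 a b pa pb : ℂ) + Complex.I * (B2 k2 k3 a b pa pb : ℂ)

def Ma1 (k1 k2 k3 : ℝ) (a b pa pb : ℝ) : ℝ :=
  (Jang a b pa pb * pa - (k2 * b - k3 * a) * a) / Real.sqrt (a ^ 2 + b ^ 2)
def Ma2 (k1 k2 k3 : ℝ) (a b pa pb : ℝ) : ℝ :=
  (-(Jang a b pa pb) * pb - 2 * k1 * a + (k2 * b - k3 * a) * b) / Real.sqrt (a ^ 2 + b ^ 2)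

/-- The complex function `M_a = M_{a1} + i M_{a2}`. -/
def Mafun (k1 k2 k3 : ℝ) (a b pa pb : ℝ) : ℂ :=
  (Ma1 k1 k2 k3 a b pa pb : ℂ) + Complex.I * (Ma2 k1 k2 k3 a b pa pb : ℂ)

def Mb1 (k1 k2 k3 : ℝ) (a b pa pb : ℝ) : ℝ :=
  (Jang a b pa pb * pb - (k2 * b - k3 * a) * b) / Real.sqrt (a ^ 2 + b ^ 2)
def Mb2 (k1 k2 k3 : ℝ) (a b pa pb : ℝ) : ℝ :=
  (Jang a b pa pb * pa - 2 * k1 * b - (k2 * b - k3 * a) * a) / Real.sqrt (a ^ 2 + b ^ 2)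

/-- The complex function `M_b = M_{b1} + i M_{b2}`. -/
def Mbfun (k1 k2 k3 : ℝ) (a b pa pb : ℝ) : ℂ :=
  (Mb1 k1 k2 k3 a b pa pb : ℂ) + Complex.I * (Mb2 k1 k2 k3 a b pa pb : ℂ)

/-- Directional derivative of a complex-valued function along a (real) tangent vector `v ∈ ℝ⁴`,
with coordinates ordered `(a, b, p_a, p_b)`. -/
def dd (f : ℝ → ℝ → ℝ → ℝ → ℂ) (a b pa pb : ℝ) (v : Fin 4 → ℝ) : ℂ :=
  pda f a b pa pb * (v 0 : ℂ) + pdb f a b pa pb * (v 1 : ℂ)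
    + pdpa f a b pa pb * (v 2 : ℂ) + pdpb f a b pa pb * (v 3 : ℂ)

/-- Directional derivative of a real-valued function along a tangent vector `v ∈ ℝ⁴`. -/
def ddR (f : ℝ → ℝ → ℝ → ℝ → ℝ) (a b pa pb : ℝ) (v : Fin 4 → ℝ) : ℝ :=
  pdaR f a b pa pb * v 0 + pdbR f a b pa pb * v 1
    + pdpaR f a b pa pb * v 2 + pdpbR f a b pa pb * v 3

/-- The 2-form `dF ∧ dG` evaluated on a pair of tangent vectors. -/
def wedgeR (f g : ℝ → ℝ → ℝ → ℝ → ℝ) (a b pa pb : ℝ) (u v : Fin 4 → ℝ) : ℝ :=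
  ddR f a b pa pb u * ddR g a b pa pb v - ddR f a b pa pb v * ddR g a b pa pb u

/-- Hamiltonian vector field of a real-valued function:
`(∂f/∂p_a, ∂f/∂p_b, -∂f/∂a, -∂f/∂b)`. -/
def hamVF (f : ℝ → ℝ → ℝ → ℝ → ℝ) (a b pa pb : ℝ) : Fin 4 → ℝ :=
  ![pdpaR f a b pa pb, pdpbR f a b pa pb, -pdaR f a b pa pb, -pdbR f a b pa pb]

/-- Hamiltonian vector field of a complex-valued function. -/
def hamVFC (f : ℝ → ℝ → ℝ → ℝ → ℂ) (a b pa pb : ℝ) : Fin 4 → ℂ :=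
  ![pdpa f a b pa pb, pdpb f a b pa pb, -pda f a b pa pb, -pdb f a b pa pb]

/-- The Hamiltonian vector field `Γ` of `H_{K2}`. -/
def GammaVF (k1 k2 k3 : ℝ) (a b pa pb : ℝ) : Fin 4 → ℝ := hamVF (HR k1 k2 k3) a b pa pb

/-- The real first integral `J₃ = Re (A·B*)`. -/
def J3fun (k1 k2 k3 : ℝ) (a b pa pb : ℝ) : ℝ :=
  (Afun a b pa pb * (starRingEnd ℂ) (Bfun k1 k2 k3 a b pa pb)).re

/-- The real first integral `J₄ = Im (A·B*)`. -/
def J4fun (k1 k2 k3 : ℝ) (a b pa pb : ℝ) : ℝ :=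
  (Afun a b pa pb * (starRingEnd ℂ) (Bfun k1 k2 k3 a b pa pb)).im

/-- The explicit coordinate expression for `J₃`. -/
def J3ex (k1 k2 k3 : ℝ) (a b pa pb : ℝ) : ℝ :=
  Jang a b pa pb * (a * pb + b * pa) / (a ^ 2 + b ^ 2)
    + 2 * ((k1 / 2) * ((a ^ 2 - b ^ 2) / (a ^ 2 + b ^ 2))
        - k2 * (a * b ^ 2 / (a ^ 2 + b ^ 2)) + k3 * (a ^ 2 * b / (a ^ 2 + b ^ 2)))

/-- The explicit coordinate expression for `J₄`. -/
def J4ex (k1 k2 k3 : ℝ) (a b pa pb : ℝ) : ℝ :=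
  Jang a b pa pb * (a * pa - b * pb) / (a ^ 2 + b ^ 2)
    - 2 * (k1 * (a * b / (a ^ 2 + b ^ 2))
        + (k2 / 2) * (b * (a ^ 2 - b ^ 2) / (a ^ 2 + b ^ 2))
        + (k3 / 2) * (a * (b ^ 2 - a ^ 2) / (a ^ 2 + b ^ 2)))

/-- The real first integral `K₃ = Re (M_a·M_b*)`. -/
def K3fun (k1 k2 k3 : ℝ) (a b pa pb : ℝ) : ℝ :=
  (Mafun k1 k2 k3 a b pa pb * (starRingEnd ℂ) (Mbfun k1 k2 k3 a b pa pb)).re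

/-- The real first integral `K₄ = Im (M_a·M_b*)`. -/
def K4fun (k1 k2 k3 : ℝ) (a b pa pb : ℝ) : ℝ :=
  (Mafun k1 k2 k3 a b pa pb * (starRingEnd ℂ) (Mbfun k1 k2 k3 a b pa pb)).im

/-- The real 2-form `Ω₁ = dA₁ ∧ dB₁ + dA₂ ∧ dB₂`. -/
def Om1 (k1 k2 k3 : ℝ) (a b pa pb : ℝ) (u v : Fin 4 → ℝ) : ℝ :=
  wedgeR A1 (B1 k1) a b pa pb u v + wedgeR A2 (B2 k2 k3) a b pa pb u v

/-- The real 2-form `Ω₂ = -dA₁ ∧ dB₂ + dA₂ ∧ dB₁`. -/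
def Om2 (k1 k2 k3 : ℝ) (a b pa pb : ℝ) (u v : Fin 4 → ℝ) : ℝ :=
  -wedgeR A1 (B2 k2 k3) a b pa pb u v + wedgeR A2 (B1 k1) a b pa pb u v

/-- The real 2-form `Ω_{M1} = dM_{a1} ∧ dM_{b1} + dM_{a2} ∧ dM_{b2}`. -/
def OmM1 (k1 k2 k3 : ℝ) (a b pa pb : ℝ) (u v : Fin 4 → ℝ) : ℝ :=
  wedgeR (Ma1 k1 k2 k3) (Mb1 k1 k2 k3) a b pa pb u v
    + wedgeR (Ma2 k1 k2 k3) (Mb2 k1 k2 k3) a b pa pb u v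

/-- The real 2-form `Ω_{M2} = -dM_{a1} ∧ dM_{b2} + dM_{a2} ∧ dM_{b1}`. -/
def OmM2 (k1 k2 k3 : ℝ) (a b pa pb : ℝ) (u v : Fin 4 → ℝ) : ℝ :=
  -wedgeR (Ma1 k1 k2 k3) (Mb2 k1 k2 k3) a b pa pb u v
    + wedgeR (Ma2 k1 k2 k3) (Mb1 k1 k2 k3) a b pa pb u v

/-- The standard basis vectors of `ℝ⁴`. -/
def ebasis (j : Fin 4) : Fin 4 → ℝ := Pi.single j 1

/-! Writing `z = a + i b`, the function `A = z² / |z|² = z / z̄` depends on position only, so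
`{A, H} = (p_a ∂_a A + p_b ∂_b A) / (a² + b²)`. Logarithmic differentiation of `z / z̄` gives
`∂_a A = -2 i b A / |z|²` and `∂_b A = 2 i a A / |z|²`, hence `{A, H} = 2 i J A / |z|⁴`. -/

theorem PB_eq_of_momentum_free {f : ℝ → ℝ → ℝ → ℝ → ℂ} (g : ℝ → ℝ → ℝ → ℝ → ℂ)
    (hf : ∀ a b pa pb, f a b pa pb = f a b 0 0) (a b pa pb : ℝ) :
    PB f g a b pa pb = pda f a b pa pb * pdpa g a b pa pb + pdb f a b pa pb * pdpb g a b pa pb := by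
  have hpa : pdpa f a b pa pb = 0 := by simp only [pdpa, hf a b _ pb, deriv_const]
  have hpb : pdpb f a b pa pb = 0 := by simp only [pdpb, hf a b pa _, deriv_const]
  rw [PB, hpa, hpb]
  ring

theorem hasDerivAt_HR_pa (k1 k2 k3 a b pa pb : ℝ) :
    HasDerivAt (fun t => HR k1 k2 k3 a b t pb) (pa / (a ^ 2 + b ^ 2)) pa := by
  have h : HasDerivAt (fun t => HR k1 k2 k3 a b t pb) _ pa :=
    (((hasDerivAt_pow 2 pa).add_const (pb ^ 2)).div_const (2 * (a ^ 2 + b ^ 2))).add_const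
      ((k1 + k2 * a + k3 * b) / (a ^ 2 + b ^ 2))
  refine h.congr_deriv ?_
  norm_num [mul_div_mul_left]

theorem hasDerivAt_HR_pb (k1 k2 k3 a b pa pb : ℝ) :
    HasDerivAt (fun t => HR k1 k2 k3 a b pa t) (pb / (a ^ 2 + b ^ 2)) pb := by
  have h : HasDerivAt (fun t => HR k1 k2 k3 a b pa t) _ pb :=
    (((hasDerivAt_pow 2 pb).const_add (pa ^ 2)).div_const (2 * (a ^ 2 + b ^ 2))).add_const
      ((k1 + k2 * a + k3 * b) / (a ^ 2 + b ^ 2))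
  refine h.congr_deriv ?_
  norm_num [mul_div_mul_left]

theorem pdpa_HC (k1 k2 k3 a b pa pb : ℝ) :
    pdpa (HC k1 k2 k3) a b pa pb = (pa : ℂ) / ((a : ℂ) ^ 2 + (b : ℂ) ^ 2) := by
  simp only [pdpa, HC]
  rw [(hasDerivAt_HR_pa k1 k2 k3 a b pa pb).ofReal_comp.deriv]
  push_cast
  rfl

theorem pdpb_HC (k1 k2 k3 a b pa pb : ℝ) :
    pdpb (HC k1 k2 k3) a b pa pb = (pb : ℂ) / ((a : ℂ) ^ 2 + (b : ℂ) ^ 2) := by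
  simp only [pdpb, HC]
  rw [(hasDerivAt_HR_pb k1 k2 k3 a b pa pb).ofReal_comp.deriv]
  push_cast
  rfl

theorem Afun_eq_sq_div (a b pa pb : ℝ) :
    Afun a b pa pb = ((a : ℂ) + I * b) ^ 2 / ((a : ℂ) ^ 2 + (b : ℂ) ^ 2) := by
  simp only [Afun, A1, A2]
  push_cast
  rw [mul_div_assoc', ← add_div]
  congr 1
  linear_combination (-(b : ℂ) ^ 2) * I_sq

theorem pda_Afun {a b : ℝ} (hU : a ^ 2 + b ^ 2 ≠ 0) (pa pb : ℝ) :
    pda Afun a b pa pb = -2 * I * b / ((a : ℂ) ^ 2 + (b : ℂ) ^ 2) * Afun a b pa pb := by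
  have hr : (a : ℂ) ^ 2 + (b : ℂ) ^ 2 ≠ 0 := by exact_mod_cast hU
  have h : HasDerivAt (fun w : ℂ => (w + I * b) ^ 2 / (w ^ 2 + (b : ℂ) ^ 2)) _ (a : ℂ) :=
    (((hasDerivAt_id _).add_const _).pow 2).div ((hasDerivAt_pow 2 _).add_const _) hr
  simp only [pda, Afun_eq_sq_div]
  rw [h.comp_ofReal.deriv]
  simp only [Pi.pow_apply]
  field_simp
  linear_combination (2 * (a : ℂ) * b ^ 2 + 2 * I * b ^ 3) * I_sq

theorem pdb_Afun {a b : ℝ} (hU : a ^ 2 + b ^ 2 ≠ 0) (pa pb : ℝ) :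
    pdb Afun a b pa pb = 2 * I * a / ((a : ℂ) ^ 2 + (b : ℂ) ^ 2) * Afun a b pa pb := by
  have hr : (a : ℂ) ^ 2 + (b : ℂ) ^ 2 ≠ 0 := by exact_mod_cast hU
  have h : HasDerivAt (fun w : ℂ => ((a : ℂ) + I * w) ^ 2 / ((a : ℂ) ^ 2 + w ^ 2)) _ (b : ℂ) :=
    ((((hasDerivAt_id _).const_mul I).const_add _).pow 2).div ((hasDerivAt_pow 2 _).const_add _) hr
  simp only [pdb, Afun_eq_sq_div]
  rw [h.comp_ofReal.deriv]
  simp only [Pi.pow_apply, id]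
  field_simp
  linear_combination (-2 * I * (a : ℂ) * b ^ 2 - 2 * a ^ 2 * b) * I_sq

/-- `{A, H} = 2 i λ A` on `U`. -/
theorem stmt0 (k1 k2 k3 : ℝ) (a b pa pb : ℝ) (hU : a ^ 2 + b ^ 2 ≠ 0) :
    PB Afun (HC k1 k2 k3) a b pa pb =
      2 * Complex.I * (lam a b pa pb : ℂ) * Afun a b pa pb := by
  rw [PB_eq_of_momentum_free _ (fun _ _ _ _ => rfl), pdpa_HC, pdpb_HC, pda_Afun hU, pdb_Afun hU,
    lam, Jang]
  have hr : (a : ℂ) ^ 2 + (b : ℂ) ^ 2 ≠ 0 := by exact_mod_cast hU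
  push_cast
  field_simp
  ring
end
end

section
/- The complex function B = B₁ + iB₂ with B₁ = J²/(a² + b²) + k₁ and B₂ = J(a p_a + b p_b)/(a² + b²) + k₃ a − k₂ b satisfies the Poisson-bracket relation {B, H} = 2iλB at every point of U. -/
/-! The identity `J + i (a p_a + b p_b) = (a + i b)(p_b + i p_a)` puts `B` in the form
`B = J (a + i b)(p_b + i p_a) / (a² + b²) + k₁ + i (k₃ a - k₂ b)`, whose partial derivatives are
short: with `u = (p_b + i p_a)/(a - i b)` one gets `∂_a B = i (k₃ - b u²)` and
`∂_b B = i (a u² - k₂)`. Together with `∂_a H = (k₂ - 2 a H)/(a² + b²)` and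
`∂_b H = (k₃ - 2 b H)/(a² + b²)`, the bracket `{B, H}` becomes a rational identity in
`a, b, p_a, p_b` over `ℂ`, which holds modulo `i² = -1`. -/

noncomputable section

open Complex

def HasPartials (f : ℝ → ℝ → ℝ → ℝ → ℂ) (a b pa pb : ℝ) (fa fb fpa fpb : ℂ) : Prop :=
  HasDerivAt (fun t => f t b pa pb) fa a ∧ HasDerivAt (fun t => f a t pa pb) fb b ∧
    HasDerivAt (fun t => f a b t pb) fpa pa ∧ HasDerivAt (fun t => f a b pa t) fpb pb

namespace HasPartials

variable {f g : ℝ → ℝ → ℝ → ℝ → ℂ} {a b pa pb : ℝ} {fa fb fpa fpb ga gb gpa gpb : ℂ}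

theorem PB_eq (hf : HasPartials f a b pa pb fa fb fpa fpb)
    (hg : HasPartials g a b pa pb ga gb gpa gpb) :
    PB f g a b pa pb = fa * gpa + fb * gpb - fpa * ga - fpb * gb := by
  simp only [PB, pda, pdb, pdpa, pdpb, hf.1.deriv, hf.2.1.deriv, hf.2.2.1.deriv, hf.2.2.2.deriv,
    hg.1.deriv, hg.2.1.deriv, hg.2.2.1.deriv, hg.2.2.2.deriv]

theorem add (hf : HasPartials f a b pa pb fa fb fpa fpb)
    (hg : HasPartials g a b pa pb ga gb gpa gpb) :
    HasPartials (fun a b pa pb => f a b pa pb + g a b pa pb) a b pa pb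
      (fa + ga) (fb + gb) (fpa + gpa) (fpb + gpb) :=
  ⟨hf.1.add hg.1, hf.2.1.add hg.2.1, hf.2.2.1.add hg.2.2.1, hf.2.2.2.add hg.2.2.2⟩

theorem sub (hf : HasPartials f a b pa pb fa fb fpa fpb)
    (hg : HasPartials g a b pa pb ga gb gpa gpb) :
    HasPartials (fun a b pa pb => f a b pa pb - g a b pa pb) a b pa pb
      (fa - ga) (fb - gb) (fpa - gpa) (fpb - gpb) :=
  ⟨hf.1.sub hg.1, hf.2.1.sub hg.2.1, hf.2.2.1.sub hg.2.2.1, hf.2.2.2.sub hg.2.2.2⟩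

theorem mul (hf : HasPartials f a b pa pb fa fb fpa fpb)
    (hg : HasPartials g a b pa pb ga gb gpa gpb) :
    HasPartials (fun a b pa pb => f a b pa pb * g a b pa pb) a b pa pb
      (fa * g a b pa pb + f a b pa pb * ga) (fb * g a b pa pb + f a b pa pb * gb)
      (fpa * g a b pa pb + f a b pa pb * gpa) (fpb * g a b pa pb + f a b pa pb * gpb) :=
  ⟨hf.1.mul hg.1, hf.2.1.mul hg.2.1, hf.2.2.1.mul hg.2.2.1, hf.2.2.2.mul hg.2.2.2⟩

theorem div (hf : HasPartials f a b pa pb fa fb fpa fpb)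
    (hg : HasPartials g a b pa pb ga gb gpa gpb) (h : g a b pa pb ≠ 0) :
    HasPartials (fun a b pa pb => f a b pa pb / g a b pa pb) a b pa pb
      ((fa * g a b pa pb - f a b pa pb * ga) / g a b pa pb ^ 2)
      ((fb * g a b pa pb - f a b pa pb * gb) / g a b pa pb ^ 2)
      ((fpa * g a b pa pb - f a b pa pb * gpa) / g a b pa pb ^ 2)
      ((fpb * g a b pa pb - f a b pa pb * gpb) / g a b pa pb ^ 2) :=
  ⟨hf.1.div hg.1 h, hf.2.1.div hg.2.1 h, hf.2.2.1.div hg.2.2.1 h, hf.2.2.2.div hg.2.2.2 h⟩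

theorem pow (hf : HasPartials f a b pa pb fa fb fpa fpb) (n : ℕ) :
    HasPartials (fun a b pa pb => f a b pa pb ^ n) a b pa pb
      (n * f a b pa pb ^ (n - 1) * fa) (n * f a b pa pb ^ (n - 1) * fb)
      (n * f a b pa pb ^ (n - 1) * fpa) (n * f a b pa pb ^ (n - 1) * fpb) :=
  ⟨hf.1.fun_pow n, hf.2.1.fun_pow n, hf.2.2.1.fun_pow n, hf.2.2.2.fun_pow n⟩

end HasPartials

theorem hasPartials_const (c : ℂ) {a b pa pb : ℝ} :
    HasPartials (fun _ _ _ _ => c) a b pa pb 0 0 0 0 :=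
  ⟨hasDerivAt_const _ _, hasDerivAt_const _ _, hasDerivAt_const _ _, hasDerivAt_const _ _⟩

theorem hasPartials_a {a b pa pb : ℝ} :
    HasPartials (fun a _ _ _ => (a : ℂ)) a b pa pb 1 0 0 0 :=
  ⟨ofRealCLM.hasDerivAt, hasDerivAt_const _ _, hasDerivAt_const _ _, hasDerivAt_const _ _⟩

theorem hasPartials_b {a b pa pb : ℝ} :
    HasPartials (fun _ b _ _ => (b : ℂ)) a b pa pb 0 1 0 0 :=
  ⟨hasDerivAt_const _ _, ofRealCLM.hasDerivAt, hasDerivAt_const _ _, hasDerivAt_const _ _⟩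

theorem hasPartials_pa {a b pa pb : ℝ} :
    HasPartials (fun _ _ pa _ => (pa : ℂ)) a b pa pb 0 0 1 0 :=
  ⟨hasDerivAt_const _ _, hasDerivAt_const _ _, ofRealCLM.hasDerivAt, hasDerivAt_const _ _⟩

theorem hasPartials_pb {a b pa pb : ℝ} :
    HasPartials (fun _ _ _ pb => (pb : ℂ)) a b pa pb 0 0 0 1 :=
  ⟨hasDerivAt_const _ _, hasDerivAt_const _ _, hasDerivAt_const _ _, ofRealCLM.hasDerivAt⟩

theorem Bfun_eq (k1 k2 k3 : ℝ) :
    Bfun k1 k2 k3 = fun a b pa pb : ℝ =>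
      ((a : ℂ) * pb - b * pa) * ((a + I * b) * (pb + I * pa)) / (a ^ 2 + b ^ 2)
        + (k1 + I * (k3 * a - k2 * b)) := by
  funext a b pa pb
  simp only [Bfun, B1, B2, Jang]
  push_cast
  grind [I_sq]

theorem HC_eq (k1 k2 k3 : ℝ) :
    HC k1 k2 k3 = fun a b pa pb : ℝ =>
      ((pa : ℂ) ^ 2 + pb ^ 2) / (2 * (a ^ 2 + b ^ 2))
        + (k1 + k2 * a + k3 * b) / (a ^ 2 + b ^ 2) := by
  funext a b pa pb
  simp only [HC, HR]
  push_cast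
  rfl

theorem ofReal_sq_add_sq_ne_zero {a b : ℝ} (h : a ^ 2 + b ^ 2 ≠ 0) : (a : ℂ) ^ 2 + b ^ 2 ≠ 0 := by
  exact_mod_cast h

theorem hasPartials_sq_add_sq {a b pa pb : ℝ} :
    HasPartials (fun a b _ _ => (a : ℂ) ^ 2 + b ^ 2) a b pa pb (2 * a) (2 * b) 0 0 := by
  convert (hasPartials_a.pow 2).add (hasPartials_b.pow 2) using 1 <;> push_cast <;> ring

theorem hasPartials_HC (k1 k2 k3 : ℝ) {a b pa pb : ℝ} (hU : a ^ 2 + b ^ 2 ≠ 0) :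
    HasPartials (HC k1 k2 k3) a b pa pb
      ((k2 - 2 * a * HC k1 k2 k3 a b pa pb) / (a ^ 2 + b ^ 2))
      ((k3 - 2 * b * HC k1 k2 k3 a b pa pb) / (a ^ 2 + b ^ 2))
      (pa / (a ^ 2 + b ^ 2)) (pb / (a ^ 2 + b ^ 2)) := by
  have hS0 := ofReal_sq_add_sq_ne_zero hU
  have hS : HasPartials _ a b pa pb _ _ _ _ := hasPartials_sq_add_sq
  have hT : HasPartials _ a b pa pb _ _ _ _ :=
    ((hasPartials_pa.pow 2).add (hasPartials_pb.pow 2)).div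
      ((hasPartials_const 2).mul hS) (mul_ne_zero two_ne_zero hS0)
  have hV : HasPartials _ a b pa pb _ _ _ _ :=
    (((hasPartials_const k1).add ((hasPartials_const k2).mul hasPartials_a)).add
      ((hasPartials_const k3).mul hasPartials_b)).div hS hS0
  rw [HC_eq]
  convert hT.add hV using 1 <;> field_simp <;> ring

theorem hasPartials_Bfun (k1 k2 k3 : ℝ) {a b pa pb : ℝ} (hU : a ^ 2 + b ^ 2 ≠ 0) :
    let J : ℂ := a * pb - b * pa
    let z : ℂ := a + I * b
    let u : ℂ := z * (pb + I * pa) / (a ^ 2 + b ^ 2)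
    HasPartials (Bfun k1 k2 k3) a b pa pb (I * (k3 - b * u ^ 2)) (I * (a * u ^ 2 - k2))
      (I * J * z / (a ^ 2 + b ^ 2) - b * u) (J * z / (a ^ 2 + b ^ 2) + a * u) := by
  intro J z u
  have hS0 := ofReal_sq_add_sq_ne_zero hU
  have hJ : HasPartials _ a b pa pb _ _ _ _ :=
    (hasPartials_a.mul hasPartials_pb).sub (hasPartials_b.mul hasPartials_pa)
  have hz : HasPartials _ a b pa pb _ _ _ _ :=
    hasPartials_a.add ((hasPartials_const I).mul hasPartials_b)
  have hw : HasPartials _ a b pa pb _ _ _ _ :=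
    hasPartials_pb.add ((hasPartials_const I).mul hasPartials_pa)
  have hK : HasPartials _ a b pa pb _ _ _ _ :=
    (hasPartials_const k1).add ((hasPartials_const I).mul
      (((hasPartials_const k3).mul hasPartials_a).sub ((hasPartials_const k2).mul hasPartials_b)))
  rw [Bfun_eq]
  convert ((hJ.mul (hz.mul hw)).div hasPartials_sq_add_sq hS0).add hK using 1 <;>
    simp only [J, z, u] <;> field_simp <;> grind [I_sq]

/-- `{B, H} = 2 i λ B` on `U`. -/
theorem stmt1 (k1 k2 k3 : ℝ) (a b pa pb : ℝ) (hU : a ^ 2 + b ^ 2 ≠ 0) :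
    PB (Bfun k1 k2 k3) (HC k1 k2 k3) a b pa pb =
      2 * Complex.I * (lam a b pa pb : ℂ) * Bfun k1 k2 k3 a b pa pb := by
  have hS0 := ofReal_sq_add_sq_ne_zero hU
  rw [(hasPartials_Bfun k1 k2 k3 hU).PB_eq (hasPartials_HC k1 k2 k3 hU), Bfun_eq, HC_eq]
  simp only [lam, Jang]
  push_cast
  field_simp
  grind [I_sq]
end
end

section
/- (Proposition 1) The complex function J₃₄ = A·B* is a constant of the motion for H, i.e. {A·B*, H} = 0 at every point of U, where B* denotes the complex conjugate of B. -/
noncomputable section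

open Complex

/-!
Writing `z = a + i b`, the function `A = z² / |z|²` is `e^{2iθ}` with `θ = arg z`, and along the
flow of `H` one has `θ' = J / (a² + b²)² = λ`. The function `B` turns out to rotate with the same
angular velocity: `{A, H} = 2iλA` and `{B, H} = 2iλB`. Since `H` is real, `{B*, H} = -2iλB*`, and
the Leibniz rule gives `{A B*, H} = 2iλ A B* - 2iλ A B* = 0`.
-/

open scoped ComplexConjugate

def HasPartialDerivsAt {E : Type*} [NormedAddCommGroup E] [NormedSpace ℝ E]
    (f : ℝ → ℝ → ℝ → ℝ → E) (fa fb fpa fpb : E) (a b pa pb : ℝ) : Prop :=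
  HasDerivAt (fun t => f t b pa pb) fa a ∧ HasDerivAt (fun t => f a t pa pb) fb b ∧
    HasDerivAt (fun t => f a b t pb) fpa pa ∧ HasDerivAt (fun t => f a b pa t) fpb pb

section PoissonBracket

variable {a b pa pb : ℝ}

theorem PBR_eq_of_hasPartialDerivsAt {f g : ℝ → ℝ → ℝ → ℝ → ℝ} {fa fb fpa fpb ga gb gpa gpb : ℝ}
    (hf : HasPartialDerivsAt f fa fb fpa fpb a b pa pb)
    (hg : HasPartialDerivsAt g ga gb gpa gpb a b pa pb) :
    PBR f g a b pa pb = fa * gpa + fb * gpb - fpa * ga - fpb * gb := by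
  obtain ⟨hfa, hfb, hfpa, hfpb⟩ := hf
  obtain ⟨hga, hgb, hgpa, hgpb⟩ := hg
  rw [PBR, pdaR, pdbR, pdpaR, pdpbR, pdaR, pdbR, pdpaR, pdpbR, hfa.deriv, hfb.deriv, hfpa.deriv,
    hfpb.deriv, hga.deriv, hgb.deriv, hgpa.deriv, hgpb.deriv]

theorem PB_eq_of_hasPartialDerivsAt {f g : ℝ → ℝ → ℝ → ℝ → ℂ} {fa fb fpa fpb ga gb gpa gpb : ℂ}
    (hf : HasPartialDerivsAt f fa fb fpa fpb a b pa pb)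
    (hg : HasPartialDerivsAt g ga gb gpa gpb a b pa pb) :
    PB f g a b pa pb = fa * gpa + fb * gpb - fpa * ga - fpb * gb := by
  obtain ⟨hfa, hfb, hfpa, hfpb⟩ := hf
  obtain ⟨hga, hgb, hgpa, hgpb⟩ := hg
  rw [PB, pda, pdb, pdpa, pdpb, pda, pdb, pdpa, pdpb, hfa.deriv, hfb.deriv, hfpa.deriv,
    hfpb.deriv, hga.deriv, hgb.deriv, hgpa.deriv, hgpb.deriv]

theorem HasPartialDerivsAt.ofReal {F : ℝ → ℝ → ℝ → ℝ → ℝ} {Fa Fb Fpa Fpb : ℝ}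
    (hF : HasPartialDerivsAt F Fa Fb Fpa Fpb a b pa pb) :
    HasPartialDerivsAt (fun a b pa pb => (F a b pa pb : ℂ)) Fa Fb Fpa Fpb a b pa pb :=
  ⟨hF.1.ofReal_comp, hF.2.1.ofReal_comp, hF.2.2.1.ofReal_comp, hF.2.2.2.ofReal_comp⟩

theorem HasPartialDerivsAt.ofReal_add_I_mul {F G : ℝ → ℝ → ℝ → ℝ → ℝ}
    {Fa Fb Fpa Fpb Ga Gb Gpa Gpb : ℝ}
    (hF : HasPartialDerivsAt F Fa Fb Fpa Fpb a b pa pb)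
    (hG : HasPartialDerivsAt G Ga Gb Gpa Gpb a b pa pb) :
    HasPartialDerivsAt (fun a b pa pb => (F a b pa pb : ℂ) + I * G a b pa pb)
      (Fa + I * Ga) (Fb + I * Gb) (Fpa + I * Gpa) (Fpb + I * Gpb) a b pa pb := by
  obtain ⟨hFa, hFb, hFpa, hFpb⟩ := hF.ofReal
  obtain ⟨hGa, hGb, hGpa, hGpb⟩ := hG.ofReal
  exact ⟨hFa.add (hGa.const_mul I), hFb.add (hGb.const_mul I), hFpa.add (hGpa.const_mul I),
    hFpb.add (hGpb.const_mul I)⟩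

theorem HasPartialDerivsAt.conj {f : ℝ → ℝ → ℝ → ℝ → ℂ} {fa fb fpa fpb : ℂ}
    (hf : HasPartialDerivsAt f fa fb fpa fpb a b pa pb) :
    HasPartialDerivsAt (fun a b pa pb => conj (f a b pa pb))
      (conj fa) (conj fb) (conj fpa) (conj fpb) a b pa pb :=
  ⟨hf.1.star, hf.2.1.star, hf.2.2.1.star, hf.2.2.2.star⟩

theorem PB_mul {f g : ℝ → ℝ → ℝ → ℝ → ℂ} {fa fb fpa fpb ga gb gpa gpb : ℂ}
    (hf : HasPartialDerivsAt f fa fb fpa fpb a b pa pb)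
    (hg : HasPartialDerivsAt g ga gb gpa gpb a b pa pb) (h : ℝ → ℝ → ℝ → ℝ → ℂ) :
    PB (fun a b pa pb => f a b pa pb * g a b pa pb) h a b pa pb
      = PB f h a b pa pb * g a b pa pb + f a b pa pb * PB g h a b pa pb := by
  obtain ⟨hfa, hfb, hfpa, hfpb⟩ := hf
  obtain ⟨hga, hgb, hgpa, hgpb⟩ := hg
  simp only [PB, pda, pdb, pdpa, pdpb, (hfa.fun_mul hga).deriv, (hfb.fun_mul hgb).deriv,
    (hfpa.fun_mul hgpa).deriv, (hfpb.fun_mul hgpb).deriv, hfa.deriv, hfb.deriv, hfpa.deriv,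
    hfpb.deriv, hga.deriv, hgb.deriv, hgpa.deriv, hgpb.deriv]
  ring

theorem PB_conj (f : ℝ → ℝ → ℝ → ℝ → ℂ) {h : ℝ → ℝ → ℝ → ℝ → ℂ} {ha hb hpa hpb : ℝ}
    (hh : HasPartialDerivsAt h ha hb hpa hpb a b pa pb) :
    PB (fun a b pa pb => conj (f a b pa pb)) h a b pa pb = conj (PB f h a b pa pb) := by
  have deriv_conj (g : ℝ → ℂ) (x : ℝ) : deriv (fun t => conj (g t)) x = conj (deriv g x) :=
    deriv.star
  obtain ⟨hha, hhb, hhpa, hhpb⟩ := hh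
  simp only [PB, pda, pdb, pdpa, pdpb, deriv_conj, hha.deriv, hhb.deriv, hhpa.deriv, hhpb.deriv,
    map_sub, map_add, map_mul, Complex.conj_ofReal]

theorem PB_ofReal_add_I_mul_of_rotation {F G H : ℝ → ℝ → ℝ → ℝ → ℝ} {ω : ℝ}
    {Fa Fb Fpa Fpb Ga Gb Gpa Gpb Ha Hb Hpa Hpb : ℝ}
    (hF : HasPartialDerivsAt F Fa Fb Fpa Fpb a b pa pb)
    (hG : HasPartialDerivsAt G Ga Gb Gpa Gpb a b pa pb)
    (hH : HasPartialDerivsAt H Ha Hb Hpa Hpb a b pa pb)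
    (hFH : PBR F H a b pa pb = -(ω * G a b pa pb)) (hGH : PBR G H a b pa pb = ω * F a b pa pb) :
    PB (fun a b pa pb => (F a b pa pb : ℂ) + I * G a b pa pb) (fun a b pa pb => (H a b pa pb : ℂ))
      a b pa pb = I * ω * (F a b pa pb + I * G a b pa pb) := by
  rw [PBR_eq_of_hasPartialDerivsAt hF hH] at hFH
  rw [PBR_eq_of_hasPartialDerivsAt hG hH] at hGH
  rw [PB_eq_of_hasPartialDerivsAt (hF.ofReal_add_I_mul hG) hH.ofReal]
  apply Complex.ext <;> simp <;> linarith

end PoissonBracket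

section Kepler

variable {k1 k2 k3 a b pa pb : ℝ}

theorem hasPartialDerivsAt_HR (hU : a ^ 2 + b ^ 2 ≠ 0) :
    HasPartialDerivsAt (HR k1 k2 k3)
      ((k2 - 2 * a * HR k1 k2 k3 a b pa pb) / (a ^ 2 + b ^ 2))
      ((k3 - 2 * b * HR k1 k2 k3 a b pa pb) / (a ^ 2 + b ^ 2))
      (pa / (a ^ 2 + b ^ 2)) (pb / (a ^ 2 + b ^ 2)) a b pa pb := by
  have h2U : 2 * (a ^ 2 + b ^ 2) ≠ 0 := mul_ne_zero two_ne_zero hU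
  refine ⟨?_, ?_, ?_, ?_⟩
  · exact ((hasDerivAt_const a (pa ^ 2 + pb ^ 2)).fun_div
      (((hasDerivAt_pow 2 a).add_const (b ^ 2)).const_mul 2) h2U).add
      ((((hasDerivAt_id' a).const_mul k2).const_add k1).add_const (k3 * b) |>.fun_div
        ((hasDerivAt_pow 2 a).add_const (b ^ 2)) hU)
      |>.congr_deriv (by simp only [HR]; field_simp; ring)
  · exact ((hasDerivAt_const b (pa ^ 2 + pb ^ 2)).fun_div
      (((hasDerivAt_pow 2 b).const_add (a ^ 2)).const_mul 2) h2U).add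
      ((((hasDerivAt_id' b).const_mul k3).const_add (k1 + k2 * a)) |>.fun_div
        ((hasDerivAt_pow 2 b).const_add (a ^ 2)) hU)
      |>.congr_deriv (by simp only [HR]; field_simp; ring)
  · exact ((hasDerivAt_pow 2 pa).add_const (pb ^ 2)).div_const (2 * (a ^ 2 + b ^ 2))
      |>.add_const _
      |>.congr_deriv (by norm_num; field_simp)
  · exact ((hasDerivAt_pow 2 pb).const_add (pa ^ 2)).div_const (2 * (a ^ 2 + b ^ 2))
      |>.add_const _
      |>.congr_deriv (by norm_num; field_simp)

theorem hasPartialDerivsAt_A1 (hU : a ^ 2 + b ^ 2 ≠ 0) :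
    HasPartialDerivsAt A1 (4 * a * b ^ 2 / (a ^ 2 + b ^ 2) ^ 2)
      (-(4 * a ^ 2 * b / (a ^ 2 + b ^ 2) ^ 2)) 0 0 a b pa pb := by
  refine ⟨?_, ?_, hasDerivAt_const _ _, hasDerivAt_const _ _⟩
  · exact ((hasDerivAt_pow 2 a).sub_const (b ^ 2)).fun_div
      ((hasDerivAt_pow 2 a).add_const (b ^ 2)) hU
      |>.congr_deriv (by field_simp; ring)
  · exact ((hasDerivAt_pow 2 b).const_sub (a ^ 2)).fun_div
      ((hasDerivAt_pow 2 b).const_add (a ^ 2)) hU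
      |>.congr_deriv (by field_simp; ring)

theorem hasPartialDerivsAt_A2 (hU : a ^ 2 + b ^ 2 ≠ 0) :
    HasPartialDerivsAt A2 (2 * b * (b ^ 2 - a ^ 2) / (a ^ 2 + b ^ 2) ^ 2)
      (2 * a * (a ^ 2 - b ^ 2) / (a ^ 2 + b ^ 2) ^ 2) 0 0 a b pa pb := by
  refine ⟨?_, ?_, hasDerivAt_const _ _, hasDerivAt_const _ _⟩
  · exact (((hasDerivAt_id' a).const_mul 2).mul_const b).fun_div
      ((hasDerivAt_pow 2 a).add_const (b ^ 2)) hU |>.congr_deriv (by field_simp; ring)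
  · exact ((hasDerivAt_id' b).const_mul (2 * a)).fun_div
      ((hasDerivAt_pow 2 b).const_add (a ^ 2)) hU |>.congr_deriv (by field_simp; ring)

theorem hasPartialDerivsAt_B1 (hU : a ^ 2 + b ^ 2 ≠ 0) :
    HasPartialDerivsAt (B1 k1)
      (2 * Jang a b pa pb * pb / (a ^ 2 + b ^ 2)
        - 2 * a * Jang a b pa pb ^ 2 / (a ^ 2 + b ^ 2) ^ 2)
      (-(2 * Jang a b pa pb * pa / (a ^ 2 + b ^ 2))
        - 2 * b * Jang a b pa pb ^ 2 / (a ^ 2 + b ^ 2) ^ 2)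
      (-(2 * b * Jang a b pa pb / (a ^ 2 + b ^ 2))) (2 * a * Jang a b pa pb / (a ^ 2 + b ^ 2))
      a b pa pb := by
  refine ⟨?_, ?_, ?_, ?_⟩
  · exact ((((hasDerivAt_id' a).mul_const pb).sub_const (b * pa)).fun_pow 2).fun_div
      ((hasDerivAt_pow 2 a).add_const (b ^ 2)) hU |>.add_const k1
      |>.congr_deriv (by simp only [Jang]; field_simp; ring)
  · exact ((((hasDerivAt_id' b).mul_const pa).const_sub (a * pb)).fun_pow 2).fun_div
      ((hasDerivAt_pow 2 b).const_add (a ^ 2)) hU |>.add_const k1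
      |>.congr_deriv (by simp only [Jang]; field_simp; ring)
  · exact ((((hasDerivAt_id' pa).const_mul b).const_sub (a * pb)).fun_pow 2).div_const
      (a ^ 2 + b ^ 2) |>.add_const k1 |>.congr_deriv (by simp only [Jang]; field_simp; ring)
  · exact ((((hasDerivAt_id' pb).const_mul a).sub_const (b * pa)).fun_pow 2).div_const
      (a ^ 2 + b ^ 2) |>.add_const k1 |>.congr_deriv (by simp only [Jang]; field_simp; ring)

theorem hasPartialDerivsAt_B2 (hU : a ^ 2 + b ^ 2 ≠ 0) :
    HasPartialDerivsAt (B2 k2 k3)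
      ((pb * (a * pa + b * pb) + pa * Jang a b pa pb) / (a ^ 2 + b ^ 2)
        - 2 * a * Jang a b pa pb * (a * pa + b * pb) / (a ^ 2 + b ^ 2) ^ 2 + k3)
      ((pb * Jang a b pa pb - pa * (a * pa + b * pb)) / (a ^ 2 + b ^ 2)
        - 2 * b * Jang a b pa pb * (a * pa + b * pb) / (a ^ 2 + b ^ 2) ^ 2 - k2)
      ((a * Jang a b pa pb - b * (a * pa + b * pb)) / (a ^ 2 + b ^ 2))
      ((b * Jang a b pa pb + a * (a * pa + b * pb)) / (a ^ 2 + b ^ 2)) a b pa pb := by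
  refine ⟨?_, ?_, ?_, ?_⟩
  · exact (((((hasDerivAt_id' a).mul_const pb).sub_const (b * pa)).fun_mul
      (((hasDerivAt_id' a).mul_const pa).add_const (b * pb))).fun_div
      ((hasDerivAt_pow 2 a).add_const (b ^ 2)) hU).add ((hasDerivAt_id' a).const_mul k3)
      |>.sub_const (k2 * b) |>.congr_deriv (by simp only [Jang]; field_simp; ring)
  · exact (((((hasDerivAt_id' b).mul_const pa).const_sub (a * pb)).fun_mul
      (((hasDerivAt_id' b).mul_const pb).const_add (a * pa))).fun_div
      ((hasDerivAt_pow 2 b).const_add (a ^ 2)) hU).add_const (k3 * a)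
      |>.sub ((hasDerivAt_id' b).const_mul k2)
      |>.congr_deriv (by simp only [Jang]; field_simp; ring)
  · exact ((((hasDerivAt_id' pa).const_mul b).const_sub (a * pb)).fun_mul
      (((hasDerivAt_id' pa).const_mul a).add_const (b * pb))).div_const (a ^ 2 + b ^ 2)
      |>.add_const (k3 * a) |>.sub_const (k2 * b)
      |>.congr_deriv (by simp only [Jang]; field_simp; ring)
  · exact ((((hasDerivAt_id' pb).const_mul a).sub_const (b * pa)).fun_mul
      (((hasDerivAt_id' pb).const_mul b).const_add (a * pa))).div_const (a ^ 2 + b ^ 2)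
      |>.add_const (k3 * a) |>.sub_const (k2 * b)
      |>.congr_deriv (by simp only [Jang]; field_simp; ring)

theorem PBR_A1_HR (hU : a ^ 2 + b ^ 2 ≠ 0) :
    PBR A1 (HR k1 k2 k3) a b pa pb = -(2 * lam a b pa pb * A2 a b pa pb) := by
  rw [PBR_eq_of_hasPartialDerivsAt (hasPartialDerivsAt_A1 hU) (hasPartialDerivsAt_HR hU)]
  simp only [lam, A2, Jang]
  field_simp
  ring

theorem PBR_A2_HR (hU : a ^ 2 + b ^ 2 ≠ 0) :
    PBR A2 (HR k1 k2 k3) a b pa pb = 2 * lam a b pa pb * A1 a b pa pb := by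
  rw [PBR_eq_of_hasPartialDerivsAt (hasPartialDerivsAt_A2 hU) (hasPartialDerivsAt_HR hU)]
  simp only [lam, A1, Jang]
  field_simp
  ring

theorem PBR_B1_HR (hU : a ^ 2 + b ^ 2 ≠ 0) :
    PBR (B1 k1) (HR k1 k2 k3) a b pa pb = -(2 * lam a b pa pb * B2 k2 k3 a b pa pb) := by
  rw [PBR_eq_of_hasPartialDerivsAt (hasPartialDerivsAt_B1 hU) (hasPartialDerivsAt_HR hU)]
  simp only [lam, B2, HR, Jang]
  field_simp
  ring

theorem PBR_B2_HR (hU : a ^ 2 + b ^ 2 ≠ 0) :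
    PBR (B2 k2 k3) (HR k1 k2 k3) a b pa pb = 2 * lam a b pa pb * B1 k1 a b pa pb := by
  rw [PBR_eq_of_hasPartialDerivsAt (hasPartialDerivsAt_B2 hU) (hasPartialDerivsAt_HR hU)]
  simp only [lam, B1, HR, Jang]
  field_simp
  ring

theorem PB_Afun_HC (hU : a ^ 2 + b ^ 2 ≠ 0) :
    PB Afun (HC k1 k2 k3) a b pa pb = I * ↑(2 * lam a b pa pb) * Afun a b pa pb :=
  PB_ofReal_add_I_mul_of_rotation (hasPartialDerivsAt_A1 hU) (hasPartialDerivsAt_A2 hU)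
    (hasPartialDerivsAt_HR hU) (PBR_A1_HR hU) (PBR_A2_HR hU)

theorem PB_Bfun_HC (hU : a ^ 2 + b ^ 2 ≠ 0) :
    PB (Bfun k1 k2 k3) (HC k1 k2 k3) a b pa pb
      = I * ↑(2 * lam a b pa pb) * Bfun k1 k2 k3 a b pa pb :=
  PB_ofReal_add_I_mul_of_rotation (hasPartialDerivsAt_B1 hU) (hasPartialDerivsAt_B2 hU)
    (hasPartialDerivsAt_HR hU) (PBR_B1_HR hU) (PBR_B2_HR hU)

end Kepler

/-- Proposition 1: `J₃₄ = A·B*` is a constant of the motion: `{A·B*, H} = 0`. -/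
theorem stmt2 (k1 k2 k3 : ℝ) (a b pa pb : ℝ) (hU : a ^ 2 + b ^ 2 ≠ 0) :
    PB (fun a b pa pb => Afun a b pa pb * (starRingEnd ℂ) (Bfun k1 k2 k3 a b pa pb))
      (HC k1 k2 k3) a b pa pb = 0 := by
  have hA : HasPartialDerivsAt Afun _ _ _ _ a b pa pb :=
    (hasPartialDerivsAt_A1 hU).ofReal_add_I_mul (hasPartialDerivsAt_A2 hU)
  have hB :
      HasPartialDerivsAt (fun a b pa pb => conj (Bfun k1 k2 k3 a b pa pb)) _ _ _ _ a b pa pb :=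
    ((hasPartialDerivsAt_B1 hU).ofReal_add_I_mul (hasPartialDerivsAt_B2 hU)).conj
  have hH : HasPartialDerivsAt (HC k1 k2 k3) _ _ _ _ a b pa pb :=
    (hasPartialDerivsAt_HR hU).ofReal
  rw [PB_mul hA hB, PB_conj _ hH, PB_Afun_HC hU, PB_Bfun_HC hU, map_mul, map_mul, Complex.conj_I,
    Complex.conj_ofReal]
  ring
end
end

section
/- The real function J₃ = Re(A·B*) equals J·(a p_b + b p_a)/(a² + b²) + 2[ (k₁/2)(a² − b²)/(a² + b²) − k₂ a b²/(a² + b²) + k₃ a² b/(a² + b²) ], and it is a first integral of H: {J₃, H} = 0 at every point of U. -/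
noncomputable section

open Complex

/-!
On `U` the identity `J (a p_b + b p_a) = a² p_b² - b² p_a²` turns `Re (A B*)` into the rational
function `J3ex`. The two agree on the open set `U`, so they have the same partial derivatives
there, and `{J3ex, H} = 0` is a rational-function identity once the partial derivatives of `J3ex`
and `H` are written out.
-/

open Topology

lemma J3fun_eq_J3ex (k1 k2 k3 : ℝ) {a b : ℝ} (pa pb : ℝ) (h : a ^ 2 + b ^ 2 ≠ 0) :
    J3fun k1 k2 k3 a b pa pb = J3ex k1 k2 k3 a b pa pb := by
  simp only [J3fun, Afun, Bfun, A1, A2, B1, B2, J3ex, Jang, map_add, map_mul, conj_I, conj_ofReal,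
    add_re, add_im, neg_re, neg_im, mul_re, mul_im, I_re, I_im, ofReal_re, ofReal_im]
  field_simp
  ring

lemma PBR_congr_left {f g : ℝ → ℝ → ℝ → ℝ → ℝ} (k : ℝ → ℝ → ℝ → ℝ → ℝ)
    (hfg : ∀ a b pa pb, a ^ 2 + b ^ 2 ≠ 0 → f a b pa pb = g a b pa pb)
    {a b : ℝ} (pa pb : ℝ) (h : a ^ 2 + b ^ 2 ≠ 0) :
    PBR f k a b pa pb = PBR g k a b pa pb := by
  have hda : (fun t => f t b pa pb) =ᶠ[𝓝 a] fun t => g t b pa pb :=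
    ((continuous_id.pow 2).add continuous_const).continuousAt.eventually_ne h |>.mono
      fun t ht => hfg t b pa pb ht
  have hdb : (fun t => f a t pa pb) =ᶠ[𝓝 b] fun t => g a t pa pb :=
    (continuous_const.add (continuous_id.pow 2)).continuousAt.eventually_ne h |>.mono
      fun t ht => hfg a t pa pb ht
  have hpa : (fun t => f a b t pb) = fun t => g a b t pb := funext fun t => hfg a b t pb h
  have hpb : (fun t => f a b pa t) = fun t => g a b pa t := funext fun t => hfg a b pa t h
  simp only [PBR, pdaR, pdbR, pdpaR, pdpbR, hda.deriv_eq, hdb.deriv_eq, hpa, hpb]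

section PartialDerivatives

variable {k1 k2 k3 a b pa pb : ℝ} (h : a ^ 2 + b ^ 2 ≠ 0)
include h

lemma pdaR_J3ex : pdaR (J3ex k1 k2 k3) a b pa pb =
    ((2 * a * pb ^ 2 + 2 * k1 * a - 2 * k2 * b ^ 2 + 4 * k3 * a * b) * (a ^ 2 + b ^ 2)
      - (a ^ 2 * pb ^ 2 - b ^ 2 * pa ^ 2 + k1 * (a ^ 2 - b ^ 2) - 2 * k2 * a * b ^ 2
          + 2 * k3 * a ^ 2 * b) * (2 * a)) / (a ^ 2 + b ^ 2) ^ 2 := by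
  simp (disch := first | assumption | fun_prop (disch := assumption)) only [pdaR, J3ex, Jang,
    deriv_fun_add, deriv_fun_sub, deriv_fun_mul, deriv_fun_div, deriv_fun_pow, deriv_div_const,
    deriv_const', deriv_id'']
  field_simp
  ring

lemma pdbR_J3ex : pdbR (J3ex k1 k2 k3) a b pa pb =
    ((-2 * b * pa ^ 2 - 2 * k1 * b - 4 * k2 * a * b + 2 * k3 * a ^ 2) * (a ^ 2 + b ^ 2)
      - (a ^ 2 * pb ^ 2 - b ^ 2 * pa ^ 2 + k1 * (a ^ 2 - b ^ 2) - 2 * k2 * a * b ^ 2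
          + 2 * k3 * a ^ 2 * b) * (2 * b)) / (a ^ 2 + b ^ 2) ^ 2 := by
  simp (disch := first | assumption | fun_prop (disch := assumption)) only [pdbR, J3ex, Jang,
    deriv_fun_add, deriv_fun_sub, deriv_fun_mul, deriv_fun_div, deriv_fun_pow, deriv_div_const,
    deriv_const', deriv_id'', deriv_const_mul_id']
  field_simp
  ring

lemma pdpaR_J3ex : pdpaR (J3ex k1 k2 k3) a b pa pb =
    -2 * b ^ 2 * pa / (a ^ 2 + b ^ 2) := by
  simp (disch := first | assumption | fun_prop (disch := assumption)) only [pdpaR, J3ex, Jang,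
    deriv_fun_add, deriv_fun_sub, deriv_fun_mul, deriv_fun_div, deriv_fun_pow, deriv_div_const,
    deriv_const', deriv_const_mul_id']
  field_simp
  ring

lemma pdpbR_J3ex : pdpbR (J3ex k1 k2 k3) a b pa pb =
    2 * a ^ 2 * pb / (a ^ 2 + b ^ 2) := by
  simp (disch := first | assumption | fun_prop (disch := assumption)) only [pdpbR, J3ex, Jang,
    deriv_fun_add, deriv_fun_sub, deriv_fun_mul, deriv_fun_div, deriv_fun_pow, deriv_div_const,
    deriv_const', deriv_const_mul_id']
  field_simp
  ring

lemma pdaR_HR : pdaR (HR k1 k2 k3) a b pa pb =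
    (k2 * (a ^ 2 + b ^ 2) - (pa ^ 2 + pb ^ 2) * a - (k1 + k2 * a + k3 * b) * (2 * a))
      / (a ^ 2 + b ^ 2) ^ 2 := by
  have h2 : 2 * (a ^ 2 + b ^ 2) ≠ 0 := mul_ne_zero two_ne_zero h
  simp (disch := first | assumption | fun_prop (disch := assumption)) only [pdaR, HR,
    deriv_fun_add, deriv_fun_mul, deriv_fun_div, deriv_fun_pow,
    deriv_const', deriv_id'', deriv_const_mul_id']
  field_simp
  ring

lemma pdbR_HR : pdbR (HR k1 k2 k3) a b pa pb =
    (k3 * (a ^ 2 + b ^ 2) - (pa ^ 2 + pb ^ 2) * b - (k1 + k2 * a + k3 * b) * (2 * b))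
      / (a ^ 2 + b ^ 2) ^ 2 := by
  have h2 : 2 * (a ^ 2 + b ^ 2) ≠ 0 := mul_ne_zero two_ne_zero h
  simp (disch := first | assumption | fun_prop (disch := assumption)) only [pdbR, HR,
    deriv_fun_add, deriv_fun_mul, deriv_fun_div, deriv_fun_pow,
    deriv_const', deriv_id'', deriv_const_mul_id']
  field_simp
  ring

lemma pdpaR_HR : pdpaR (HR k1 k2 k3) a b pa pb = pa / (a ^ 2 + b ^ 2) := by
  simp (disch := first | assumption | fun_prop (disch := assumption)) only [pdpaR, HR,
    deriv_fun_add, deriv_fun_mul, deriv_fun_div, deriv_fun_pow, deriv_div_const,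
    deriv_const', deriv_id'']
  field_simp
  ring

lemma pdpbR_HR : pdpbR (HR k1 k2 k3) a b pa pb = pb / (a ^ 2 + b ^ 2) := by
  simp (disch := first | assumption | fun_prop (disch := assumption)) only [pdpbR, HR,
    deriv_fun_add, deriv_fun_mul, deriv_fun_div, deriv_fun_pow, deriv_div_const,
    deriv_const', deriv_id'']
  field_simp
  ring

lemma PBR_J3ex_HR : PBR (J3ex k1 k2 k3) (HR k1 k2 k3) a b pa pb = 0 := by
  rw [PBR, pdaR_J3ex h, pdbR_J3ex h, pdpaR_J3ex h, pdpbR_J3ex h, pdaR_HR h, pdbR_HR h,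
    pdpaR_HR h, pdpbR_HR h]
  field_simp
  ring

end PartialDerivatives

/-- `J₃ = Re (A·B*)` has the stated coordinate expression and `{J₃, H} = 0`. -/
theorem stmt3 (k1 k2 k3 : ℝ) (a b pa pb : ℝ) (hU : a ^ 2 + b ^ 2 ≠ 0) :
    J3fun k1 k2 k3 a b pa pb = J3ex k1 k2 k3 a b pa pb ∧
      PBR (J3fun k1 k2 k3) (HR k1 k2 k3) a b pa pb = 0 :=
  ⟨J3fun_eq_J3ex k1 k2 k3 pa pb hU, by
    rw [PBR_congr_left (HR k1 k2 k3) (fun a b pa pb => J3fun_eq_J3ex k1 k2 k3 pa pb) pa pb hU]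
    exact PBR_J3ex_HR hU⟩
end
end

section
/- The squared modulus of B satisfies, at every point of U, the identity B·B* = 2J²H + 2J(k₃ p_a − k₂ p_b) + k₁² + (k₂ b − k₃ a)². -/
noncomputable section

open Complex

/-!
Since `B = B₁ + i B₂`, `B·B*` is the real number `B₁² + B₂²`. Clearing the denominator
`r = a² + b²`, the claimed identity reduces to Lagrange's identity
`(a p_a + b p_b)² + J² = r (p_a² + p_b²)` together with
`(k₃ a - k₂ b)(a p_a + b p_b) = J (k₂ a + k₃ b) + r (k₃ p_a - k₂ p_b)`.
-/

theorem Bfun_mul_conj (k1 k2 k3 a b pa pb : ℝ) :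
    Bfun k1 k2 k3 a b pa pb * starRingEnd ℂ (Bfun k1 k2 k3 a b pa pb) =
      ((B1 k1 a b pa pb ^ 2 + B2 k2 k3 a b pa pb ^ 2 : ℝ) : ℂ) := by
  rw [mul_conj, Bfun, mul_comm I, normSq_add_mul_I]

theorem B1_sq_add_B2_sq (k1 k2 k3 a b pa pb : ℝ) (hU : a ^ 2 + b ^ 2 ≠ 0) :
    B1 k1 a b pa pb ^ 2 + B2 k2 k3 a b pa pb ^ 2 =
      2 * Jang a b pa pb ^ 2 * HR k1 k2 k3 a b pa pb + 2 * Jang a b pa pb * (k3 * pa - k2 * pb)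
        + k1 ^ 2 + (k2 * b - k3 * a) ^ 2 := by
  have lagrange : (a * pa + b * pb) ^ 2 + Jang a b pa pb ^ 2
      = (a ^ 2 + b ^ 2) * (pa ^ 2 + pb ^ 2) := by
    unfold Jang; ring
  have cross : (k3 * a - k2 * b) * (a * pa + b * pb)
      = Jang a b pa pb * (k2 * a + k3 * b) + (a ^ 2 + b ^ 2) * (k3 * pa - k2 * pb) := by
    unfold Jang; ring
  unfold B1 B2 HR
  generalize Jang a b pa pb = J at *
  field_simp
  linear_combination J ^ 2 * lagrange + 2 * J * (a ^ 2 + b ^ 2) * cross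

/-- `B·B* = 2J²H + 2J(k₃ p_a - k₂ p_b) + k₁² + (k₂ b - k₃ a)²`. -/
theorem stmt5 (k1 k2 k3 : ℝ) (a b pa pb : ℝ) (hU : a ^ 2 + b ^ 2 ≠ 0) :
    Bfun k1 k2 k3 a b pa pb * (starRingEnd ℂ) (Bfun k1 k2 k3 a b pa pb) =
      ((2 * (Jang a b pa pb) ^ 2 * HR k1 k2 k3 a b pa pb
        + 2 * Jang a b pa pb * (k3 * pa - k2 * pb)
        + k1 ^ 2 + (k2 * b - k3 * a) ^ 2 : ℝ) : ℂ) := by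
  rw [Bfun_mul_conj, B1_sq_add_B2_sq k1 k2 k3 a b pa pb hU]
end
end

section
/- With Ω₁ = dA₁ ∧ dB₁ + dA₂ ∧ dB₂ and Ω₂ = −dA₁ ∧ dB₂ + dA₂ ∧ dB₁, the 4-forms Ω₁ ∧ Ω₁, Ω₂ ∧ Ω₂, and Ω₁ ∧ Ω₂ all vanish identically on U. Equivalently, writing α_{jk}(x) = Ω₁(x)(e_j, e_k) and β_{jk}(x) = Ω₂(x)(e_j, e_k) for the components in the standard basis e₁,…,e₄ of ℝ⁴, one has at every point of U: α₁₂α₃₄ − α₁₃α₂₄ + α₁₄α₂₃ = 0, β₁₂β₃₄ − β₁₃β₂₄ + β₁₄β₂₃ = 0, and α₁₂β₃₄ + β₁₂α₃₄ − α₁₃β₂₄ − β₁₃α₂₄ + α₁₄β₂₃ + β₁₄α₂₃ = 0. -/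
noncomputable section

open Complex

/-! `A₁ + i A₂ = (a + i b)² / |a + i b|² = e^{2iθ}` depends only on the polar angle `θ`, so
`dA₁ = -2 A₂ dθ` and `dA₂ = 2 A₁ dθ` with `dθ = (-b da + a db) / (a² + b²)`. Hence
`Ω₁ = dθ ∧ (2 A₁ dB₂ - 2 A₂ dB₁)` and `Ω₂ = dθ ∧ (2 A₁ dB₁ + 2 A₂ dB₂)` share the factor
`dθ`, and every wedge product of two of them contains `dθ ∧ dθ = 0`. -/

def gradR (f : ℝ → ℝ → ℝ → ℝ → ℝ) (a b pa pb : ℝ) : Fin 4 → ℝ :=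
  ![pdaR f a b pa pb, pdbR f a b pa pb, pdpaR f a b pa pb, pdpbR f a b pa pb]

def wedgeVec (x y : Fin 4 → ℝ) (j k : Fin 4) : ℝ := x j * y k - x k * y j

def angleForm (a b : ℝ) : Fin 4 → ℝ := ![-b / (a ^ 2 + b ^ 2), a / (a ^ 2 + b ^ 2), 0, 0]

section

variable (a b pa pb : ℝ)

lemma ddR_ebasis (f : ℝ → ℝ → ℝ → ℝ → ℝ) (j : Fin 4) :
    ddR f a b pa pb (ebasis j) = gradR f a b pa pb j := by
  fin_cases j <;> simp [ddR, ebasis, gradR]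

lemma wedgeR_ebasis (f g : ℝ → ℝ → ℝ → ℝ → ℝ) (j k : Fin 4) :
    wedgeR f g a b pa pb (ebasis j) (ebasis k) =
      wedgeVec (gradR f a b pa pb) (gradR g a b pa pb) j k := by
  simp only [wedgeR, ddR_ebasis, wedgeVec]

variable {a b}

lemma pdaR_A1 (hU : a ^ 2 + b ^ 2 ≠ 0) :
    pdaR A1 a b pa pb = 4 * a * b ^ 2 / (a ^ 2 + b ^ 2) ^ 2 := by
  have h : HasDerivAt (fun t => A1 t b pa pb) _ a :=
    ((hasDerivAt_pow 2 a).sub_const (b ^ 2)).fun_div ((hasDerivAt_pow 2 a).add_const (b ^ 2)) hU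
  rw [pdaR, h.deriv]
  field_simp
  ring

lemma pdbR_A1 (hU : a ^ 2 + b ^ 2 ≠ 0) :
    pdbR A1 a b pa pb = -4 * a ^ 2 * b / (a ^ 2 + b ^ 2) ^ 2 := by
  have h : HasDerivAt (fun t => A1 a t pa pb) _ b :=
    ((hasDerivAt_pow 2 b).const_sub (a ^ 2)).fun_div ((hasDerivAt_pow 2 b).const_add (a ^ 2)) hU
  rw [pdbR, h.deriv]
  field_simp
  ring

lemma pdaR_A2 (hU : a ^ 2 + b ^ 2 ≠ 0) :
    pdaR A2 a b pa pb = 2 * b * (b ^ 2 - a ^ 2) / (a ^ 2 + b ^ 2) ^ 2 := by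
  have h : HasDerivAt (fun t => A2 t b pa pb) _ a :=
    (((hasDerivAt_id' a).const_mul 2).mul_const b).fun_div
      ((hasDerivAt_pow 2 a).add_const (b ^ 2)) hU
  rw [pdaR, h.deriv]
  field_simp
  ring

lemma pdbR_A2 (hU : a ^ 2 + b ^ 2 ≠ 0) :
    pdbR A2 a b pa pb = 2 * a * (a ^ 2 - b ^ 2) / (a ^ 2 + b ^ 2) ^ 2 := by
  have h : HasDerivAt (fun t => A2 a t pa pb) _ b :=
    ((hasDerivAt_id' b).const_mul (2 * a)).fun_div ((hasDerivAt_pow 2 b).const_add (a ^ 2)) hU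
  rw [pdbR, h.deriv]
  field_simp
  ring

lemma gradR_A1 (hU : a ^ 2 + b ^ 2 ≠ 0) :
    gradR A1 a b pa pb = (-2 * A2 a b pa pb) • angleForm a b := by
  ext j
  fin_cases j <;> simp [gradR, angleForm, pdaR_A1, pdbR_A1, pdpaR, pdpbR, A1, A2, hU]
  · field_simp; ring
  · field_simp; ring

lemma gradR_A2 (hU : a ^ 2 + b ^ 2 ≠ 0) :
    gradR A2 a b pa pb = (2 * A1 a b pa pb) • angleForm a b := by
  ext j
  fin_cases j <;> simp [gradR, angleForm, pdaR_A2, pdbR_A2, pdpaR, pdpbR, A1, A2, hU]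
  · field_simp; ring
  · field_simp

variable (k1 k2 k3 : ℝ)

lemma Om1_ebasis (hU : a ^ 2 + b ^ 2 ≠ 0) :
    (fun j k => Om1 k1 k2 k3 a b pa pb (ebasis j) (ebasis k)) =
      wedgeVec (angleForm a b)
        ((2 * A1 a b pa pb) • gradR (B2 k2 k3) a b pa pb
          - (2 * A2 a b pa pb) • gradR (B1 k1) a b pa pb) := by
  ext j k
  simp only [Om1, wedgeR_ebasis, gradR_A1 pa pb hU, gradR_A2 pa pb hU, wedgeVec, Pi.sub_apply,
    Pi.smul_apply, smul_eq_mul]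
  ring

lemma Om2_ebasis (hU : a ^ 2 + b ^ 2 ≠ 0) :
    (fun j k => Om2 k1 k2 k3 a b pa pb (ebasis j) (ebasis k)) =
      wedgeVec (angleForm a b)
        ((2 * A1 a b pa pb) • gradR (B1 k1) a b pa pb
          + (2 * A2 a b pa pb) • gradR (B2 k2 k3) a b pa pb) := by
  ext j k
  simp only [Om2, wedgeR_ebasis, gradR_A1 pa pb hU, gradR_A2 pa pb hU, wedgeVec, Pi.add_apply,
    Pi.smul_apply, smul_eq_mul]
  ring

end

/-- the 4-forms `Ω₁ ∧ Ω₁`, `Ω₂ ∧ Ω₂` and `Ω₁ ∧ Ω₂` vanish identically on `U`,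
expressed through the components `α_{jk} = Ω₁(e_j, e_k)` and `β_{jk} = Ω₂(e_j, e_k)`. -/
theorem stmt9 (k1 k2 k3 : ℝ) (a b pa pb : ℝ) (hU : a ^ 2 + b ^ 2 ≠ 0) :
    (fun (al : Fin 4 → Fin 4 → ℝ) (be : Fin 4 → Fin 4 → ℝ) =>
        al 0 1 * al 2 3 - al 0 2 * al 1 3 + al 0 3 * al 1 2 = 0 ∧
        be 0 1 * be 2 3 - be 0 2 * be 1 3 + be 0 3 * be 1 2 = 0 ∧
        al 0 1 * be 2 3 + be 0 1 * al 2 3 - al 0 2 * be 1 3 - be 0 2 * al 1 3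
          + al 0 3 * be 1 2 + be 0 3 * al 1 2 = 0)
      (fun j k => Om1 k1 k2 k3 a b pa pb (ebasis j) (ebasis k))
      (fun j k => Om2 k1 k2 k3 a b pa pb (ebasis j) (ebasis k)) := by
  rw [Om1_ebasis pa pb k1 k2 k3 hU, Om2_ebasis pa pb k1 k2 k3 hU]
  simp only [wedgeVec]
  exact ⟨by ring, by ring, by ring⟩
end
end

section
/- The complex functions M_a and M_b satisfy, at every point of U, the Poisson-bracket relations {M_a, H} = iλM_a and {M_b, H} = iλM_b. -/
/-!
Since `H` is real, writing `M = M₁ + i M₂` turns `{M, H} = i λ M` into the pair of real identities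
`{M₁, H} = -λ M₂` and `{M₂, H} = λ M₁`; for `M_a` these are a direct computation of partial
derivatives. The exchange `(a, p_a) ↔ (b, p_b)` preserves the bracket, and combined with
`k₂ ↔ k₃` it fixes `H`, reverses the sign of `λ`, and carries `M_{a1}` to `-M_{b1}` and
`M_{a2}` to `M_{b2}`, so the identities for `M_b` follow from those for `M_a`.
-/

noncomputable section

open Complex

theorem HasDerivAt.ofReal_add_I_mul {u v : ℝ → ℝ} {u' v' t : ℝ} (hu : HasDerivAt u u' t)
    (hv : HasDerivAt v v' t) : HasDerivAt (fun x => (u x : ℂ) + I * v x) (u' + I * v') t :=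
  hu.ofReal_comp.add (hv.ofReal_comp.const_mul I)

section PoissonBracket

variable {a b pa pb : ℝ}

def uncurry4 (f : ℝ → ℝ → ℝ → ℝ → ℝ) (x : ℝ × ℝ × ℝ × ℝ) : ℝ := f x.1 x.2.1 x.2.2.1 x.2.2.2

theorem PB_ofReal_add_I_mul_ofReal {u v h : ℝ → ℝ → ℝ → ℝ → ℝ}
    (hu : DifferentiableAt ℝ (uncurry4 u) (a, b, pa, pb))
    (hv : DifferentiableAt ℝ (uncurry4 v) (a, b, pa, pb))
    (hh : DifferentiableAt ℝ (uncurry4 h) (a, b, pa, pb)) :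
    PB (fun a b pa pb => (u a b pa pb : ℂ) + I * v a b pa pb) (fun a b pa pb => (h a b pa pb : ℂ))
      a b pa pb = PBR u h a b pa pb + I * PBR v h a b pa pb := by
  have deriv_complex {f g : ℝ → ℝ} {t : ℝ} (hf : DifferentiableAt ℝ f t)
      (hg : DifferentiableAt ℝ g t) :
      deriv (fun x => (f x : ℂ) + I * g x) t = deriv f t + I * deriv g t :=
    (hf.hasDerivAt.ofReal_add_I_mul hg.hasDerivAt).deriv
  have deriv_real {f : ℝ → ℝ} {t : ℝ} (hf : DifferentiableAt ℝ f t) :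
      deriv (fun x => (f x : ℂ)) t = deriv f t :=
    hf.hasDerivAt.ofReal_comp.deriv
  unfold uncurry4 at hu hv hh
  unfold PB PBR pda pdb pdpa pdpb pdaR pdbR pdpaR pdpbR
  simp (disch := fun_prop) only [deriv_complex, deriv_real]
  push_cast
  ring

theorem PB_eq_I_mul_self_of_PBR {u v h : ℝ → ℝ → ℝ → ℝ → ℝ} {l : ℝ}
    (hu : DifferentiableAt ℝ (uncurry4 u) (a, b, pa, pb))
    (hv : DifferentiableAt ℝ (uncurry4 v) (a, b, pa, pb))
    (hh : DifferentiableAt ℝ (uncurry4 h) (a, b, pa, pb))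
    (hu_h : PBR u h a b pa pb = -l * v a b pa pb) (hv_h : PBR v h a b pa pb = l * u a b pa pb) :
    PB (fun a b pa pb => (u a b pa pb : ℂ) + I * v a b pa pb) (fun a b pa pb => (h a b pa pb : ℂ))
      a b pa pb = I * l * ((u a b pa pb : ℂ) + I * v a b pa pb) := by
  rw [PB_ofReal_add_I_mul_ofReal hu hv hh, hu_h, hv_h]
  push_cast
  linear_combination (-(l : ℂ) * v a b pa pb) * I_sq

def swapPhase (f : ℝ → ℝ → ℝ → ℝ → ℝ) (a b pa pb : ℝ) : ℝ := f b a pb pa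

theorem PBR_swapPhase (f g : ℝ → ℝ → ℝ → ℝ → ℝ) :
    PBR (swapPhase f) (swapPhase g) a b pa pb = PBR f g b a pb pa := by
  unfold PBR pdaR pdbR pdpaR pdpbR swapPhase
  ring

theorem PBR_neg_left (f g : ℝ → ℝ → ℝ → ℝ → ℝ) :
    PBR (-f) g a b pa pb = -PBR f g a b pa pb := by
  simp only [PBR, pdaR, pdbR, pdpaR, pdpbR, Pi.neg_apply, deriv.fun_neg]
  ring

end PoissonBracket

section Kepler

variable (k1 k2 k3 : ℝ) {a b pa pb : ℝ}

theorem PBR_Ma_HR (hs : 0 < a ^ 2 + b ^ 2) :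
    PBR (Ma1 k1 k2 k3) (HR k1 k2 k3) a b pa pb = -lam a b pa pb * Ma2 k1 k2 k3 a b pa pb ∧
      PBR (Ma2 k1 k2 k3) (HR k1 k2 k3) a b pa pb = lam a b pa pb * Ma1 k1 k2 k3 a b pa pb := by
  have hr : √(a ^ 2 + b ^ 2) ^ 2 = a ^ 2 + b ^ 2 := Real.sq_sqrt hs.le
  constructor
  all_goals
    unfold PBR pdaR pdbR pdpaR pdpbR Ma1 Ma2 HR lam Jang
    simp (disch := first | fun_prop (disch := positivity) | positivity) only [deriv_fun_add,
      deriv_fun_sub, deriv_fun_mul, deriv_fun_div, deriv_fun_pow, deriv_const',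
      deriv_id'', deriv_const_mul_id', _root_.deriv_sqrt, neg_sub, neg_mul, zero_mul, mul_zero,
      one_mul, mul_one, add_zero, zero_add, sub_zero, zero_sub, zero_div, sub_self, pow_one,
      Nat.cast_ofNat, Nat.add_one_sub_one, Real.sq_sqrt]
    field_simp
    rw [hr]
    ring

theorem Mb1_eq_neg_swapPhase : Mb1 k1 k2 k3 = -swapPhase (Ma1 k1 k3 k2) := by
  ext a b pa pb
  simp only [Mb1, Ma1, Jang, swapPhase, Pi.neg_apply, add_comm (b ^ 2)]
  ring

theorem Mb2_eq_swapPhase : Mb2 k1 k2 k3 = swapPhase (Ma2 k1 k3 k2) := by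
  ext a b pa pb
  simp only [Mb2, Ma2, Jang, swapPhase, add_comm (b ^ 2)]
  ring

theorem HR_eq_swapPhase : HR k1 k2 k3 = swapPhase (HR k1 k3 k2) := by
  ext a b pa pb
  simp only [HR, swapPhase, add_comm (b ^ 2)]
  ring

theorem lam_swap : lam b a pb pa = -lam a b pa pb := by
  simp only [lam, Jang, add_comm (b ^ 2)]
  ring

theorem PBR_Mb_HR (hs : 0 < a ^ 2 + b ^ 2) :
    PBR (Mb1 k1 k2 k3) (HR k1 k2 k3) a b pa pb = -lam a b pa pb * Mb2 k1 k2 k3 a b pa pb ∧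
      PBR (Mb2 k1 k2 k3) (HR k1 k2 k3) a b pa pb = lam a b pa pb * Mb1 k1 k2 k3 a b pa pb := by
  obtain ⟨hMa1, hMa2⟩ := PBR_Ma_HR k1 k3 k2 (a := b) (b := a) (pa := pb) (pb := pa) (by linarith)
  rw [HR_eq_swapPhase, Mb1_eq_neg_swapPhase, Mb2_eq_swapPhase, PBR_neg_left, PBR_swapPhase,
    PBR_swapPhase, hMa1, hMa2, lam_swap]
  simp only [Pi.neg_apply, swapPhase]
  constructor <;> ring

end Kepler

/-- `{M_a, H} = i λ M_a` and `{M_b, H} = i λ M_b` on `U`. -/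
theorem stmt12 (k1 k2 k3 : ℝ) (a b pa pb : ℝ) (hU : a ^ 2 + b ^ 2 ≠ 0) :
    PB (Mafun k1 k2 k3) (HC k1 k2 k3) a b pa pb =
        Complex.I * (lam a b pa pb : ℂ) * Mafun k1 k2 k3 a b pa pb ∧
      PB (Mbfun k1 k2 k3) (HC k1 k2 k3) a b pa pb =
        Complex.I * (lam a b pa pb : ℂ) * Mbfun k1 k2 k3 a b pa pb := by
  have hs : 0 < a ^ 2 + b ^ 2 := lt_of_le_of_ne (by positivity) hU.symm
  have hH : DifferentiableAt ℝ (uncurry4 (HR k1 k2 k3)) (a, b, pa, pb) := by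
    unfold uncurry4 HR
    fun_prop (disch := positivity)
  obtain ⟨hMa1, hMa2⟩ := PBR_Ma_HR k1 k2 k3 hs
  obtain ⟨hMb1, hMb2⟩ := PBR_Mb_HR k1 k2 k3 hs
  exact ⟨PB_eq_I_mul_self_of_PBR (by unfold uncurry4 Ma1 Jang; fun_prop (disch := positivity))
      (by unfold uncurry4 Ma2 Jang; fun_prop (disch := positivity)) hH hMa1 hMa2,
    PB_eq_I_mul_self_of_PBR (by unfold uncurry4 Mb1 Jang; fun_prop (disch := positivity))
      (by unfold uncurry4 Mb2 Jang; fun_prop (disch := positivity)) hH hMb1 hMb2⟩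
end
end
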